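/- Let p > 1 and let G = (V,E) be an infinite, connected, locally finite simple graph with uniformly bounded vertex degrees. If f, h : V → ℝ are both p-harmonic with D_p(f) < ∞ and D_p(h) < ∞, and h − f ∈ ℓ^p(V), then h = f. (In particular, each degree-one L^p-cohomology class of G contains at most one p-harmonic function up to constants.) -/

import Mathlib

open Filter Topology Metric
open scoped ENNReal Classical

/-- The `p`-Dirichlet energy of `f`: half the sum of `|f u - f v| ^ p` over
ordered pairs of adjacent vertices. -/
noncomputable def dirichletEnergy {V : Type*} (G : SimpleGraph V) (p : ℝ) (f : V → ℝ) : ℝ :=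
  (1 / 2) * ∑' q : {q : V × V // G.Adj q.1 q.2}, |f q.1.1 - f q.1.2| ^ p

/-- `f` is `p`-Dirichlet, i.e. `D_p(f) < ∞`. -/
def DirichletSummable {V : Type*} (G : SimpleGraph V) (p : ℝ) (f : V → ℝ) : Prop :=
  Summable fun q : {q : V × V // G.Adj q.1 q.2} => |f q.1.1 - f q.1.2| ^ p

/-- `G` is `p`-parabolic: for some vertex `v₀`, the infimum of `D_p(f)` over finitely
supported `f` with `f v₀ = 1` equals `0`. -/
def Parabolic {V : Type*} (G : SimpleGraph V) (p : ℝ) : Prop :=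
  ∃ v₀ : V, ∀ ε : ℝ, 0 < ε → ∃ f : V → ℝ,
    (Function.support f).Finite ∧ f v₀ = 1 ∧ dirichletEnergy G p f < ε

/-- The `p`-Laplacian `Δ_p f (v) = Σ_{u ~ v} |f u - f v| ^ (p-2) (f u - f v)`. -/
noncomputable def pLaplacian {V : Type*} (G : SimpleGraph V) (p : ℝ) (f : V → ℝ) (v : V) : ℝ :=
  ∑' u, if G.Adj u v then |f u - f v| ^ (p - 2) * (f u - f v) else 0

/-- `f` is `p`-harmonic: `Δ_p f = 0` everywhere. -/
def IsPHarmonic {V : Type*} (G : SimpleGraph V) (p : ℝ) (f : V → ℝ) : Prop :=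
  ∀ v, pLaplacian G p f v = 0

/-- `G` is locally finite. -/
def LocFin {V : Type*} (G : SimpleGraph V) : Prop := ∀ v, (G.neighborSet v).Finite

/-- `G` has uniformly bounded vertex degrees. -/
def BddDeg {V : Type*} (G : SimpleGraph V) : Prop := ∃ D : ℕ, ∀ v, (G.neighborSet v).ncard ≤ D

/-- A quasi-sphere packing of `G` in `ℝ^d` with constant `C`. -/
def IsQuasiSpherePacking {V : Type*} (G : SimpleGraph V) (d : ℕ) (C : ℝ)
    (P : V → Set (EuclideanSpace ℝ (Fin d))) : Prop :=
  (∀ v, IsCompact (P v)) ∧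
  (∃ (z : V → EuclideanSpace ℝ (Fin d)) (r : V → ℝ),
    ∀ v, 0 < r v ∧ closedBall (z v) (r v) ⊆ P v ∧ P v ⊆ closedBall (z v) (C * r v)) ∧
  (Pairwise fun u v => Disjoint (interior (P u)) (interior (P v))) ∧
  (∀ u v, u ≠ v → ((P u ∩ P v).Nonempty ↔ G.Adj u v))

/-- `G` is quasi-sphere packable in `ℝ^d`. -/
def QuasiSpherePackable {V : Type*} (G : SimpleGraph V) (d : ℕ) : Prop :=
  ∃ C : ℝ, 1 ≤ C ∧ ∃ P : V → Set (EuclideanSpace ℝ (Fin d)), IsQuasiSpherePacking G d C P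

/-- The `m`-length of a finite walk: the sum of `m` over its edges. -/
noncomputable def walkLength {V : Type*} {G : SimpleGraph V} (m : Sym2 V → ℝ) {u v : V}
    (w : G.Walk u v) : ℝ :=
  (w.edges.map m).sum

/-- The distance `d_m(u,v)`: the infimum of `m`-lengths of walks joining `u` and `v`. -/
noncomputable def graphDist {V : Type*} (G : SimpleGraph V) (m : Sym2 V → ℝ) (u v : V) : ℝ :=
  sInf {L : ℝ | ∃ w : G.Walk u v, walkLength m w = L}

/-- `m` is an `L^p` metric on `G`: positive on edges, with `Σ_e m(e)^p < ∞`. -/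
def IsLpMetric {V : Type*} (G : SimpleGraph V) (p : ℝ) (m : Sym2 V → ℝ) : Prop :=
  (∀ e ∈ G.edgeSet, 0 < m e) ∧ Summable fun e : G.edgeSet => m (e : Sym2 V) ^ p

/-- `γ : ℕ → V` is a half-infinite (self-avoiding) path in `G`. -/
def IsInfPath {V : Type*} (G : SimpleGraph V) (γ : ℕ → V) : Prop :=
  (∀ n, G.Adj (γ n) (γ (n + 1))) ∧ Function.Injective γ

/-- The `m`-length of an infinite path. -/
noncomputable def pathLength {V : Type*} (m : Sym2 V → ℝ) (γ : ℕ → V) : ℝ≥0∞ :=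
  ∑' n, ENNReal.ofReal (m s(γ n, γ (n + 1)))

/-- A family of infinite paths is `p`-null if some `L^p` metric gives all of them
infinite length. -/
def IsPNull {V : Type*} (G : SimpleGraph V) (p : ℝ) (Γ : Set (ℕ → V)) : Prop :=
  ∃ m : Sym2 V → ℝ, IsLpMetric G p m ∧ ∀ γ ∈ Γ, pathLength m γ = ⊤

/-- `x` is a `d_m`-Cauchy sequence of vertices. -/
def CauchyIn {V : Type*} (G : SimpleGraph V) (m : Sym2 V → ℝ) (x : ℕ → V) : Prop :=
  ∀ ε : ℝ, 0 < ε → ∃ N, ∀ j ≥ N, ∀ k ≥ N, graphDist G m (x j) (x k) < ε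

/-- `x` converges to a vertex of `G` in the metric `d_m`. -/
def ConvergesToVertex {V : Type*} (G : SimpleGraph V) (m : Sym2 V → ℝ) (x : ℕ → V) : Prop :=
  ∃ v : V, Tendsto (fun n => graphDist G m (x n) v) atTop (𝓝 0)

/-- `m` is a `p`-resolving metric: it is `L^p`, and for every boundary point of the
`d_m`-completion (represented by a Cauchy sequence of vertices not converging to any
vertex), the family of infinite paths converging to that boundary point is `p`-null. -/
def IsResolving {V : Type*} (G : SimpleGraph V) (p : ℝ) (m : Sym2 V → ℝ) : Prop :=
  IsLpMetric G p m ∧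
  ∀ x : ℕ → V, CauchyIn G m x → ¬ ConvergesToVertex G m x →
    IsPNull G p
      {γ | IsInfPath G γ ∧ Tendsto (fun n => graphDist G m (γ n) (x n)) atTop (𝓝 0)}

/-- `G` is `p`-resolvable. -/
def Resolvable {V : Type*} (G : SimpleGraph V) (p : ℝ) : Prop :=
  ∃ m : Sym2 V → ℝ, IsResolving G p m

/-- `|df(e)|` for an unordered edge. -/
noncomputable def edgeAbsDiff {V : Type*} (f : V → ℝ) : Sym2 V → ℝ :=
  Sym2.lift ⟨fun u v => |f u - f v|, fun u v => abs_sub_comm (f u) (f v)⟩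

/-- The graph on `ℤ^n`, two lattice points adjacent iff their `ℓ¹` distance is `1`. -/
def latticeGraph (n : ℕ) : SimpleGraph (Fin n → ℤ) where
  Adj x y := (∑ i, |x i - y i|) = 1
  symm := by
    constructor
    intro x y h
    rw [← h]
    exact Finset.sum_congr rfl fun i _ => abs_sub_comm _ _
  loopless := by
    constructor
    intro x h
    simp at h

/-- The graph on `ℤ` where `n` is adjacent to `n ± 1`. -/
def zGraph : SimpleGraph ℤ where
  Adj a b := a = b + 1 ∨ b = a + 1
  symm := ⟨fun a b h => h.symm⟩
  loopless := ⟨fun a h => by rcases h with h | h <;> omega⟩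

/-!
Put `u = h - f` and let `j_f(a, b) = φ(f b - f a)`, with `φ t = |t| ^ (p - 2) * t`, be the
`p`-current of `f` along an oriented edge. Both `j_h - j_f` and `u` are controlled by the
`ℓ^p` norms of `dh`, `df` and `u` (Young's inequality, plus bounded degree to pass from
vertices to edges), so summation by parts is legitimate and gives
`∑_{(a,b)} (u b - u a) (j_h - j_f)(a, b) = -2 ∑_a u a (Δ_p h a - Δ_p f a) = 0`.
Since `φ` is strictly increasing, every term is `≥ 0` and vanishes only if `du = 0` on that
edge; hence `u` is constant on the connected graph `G`, and a constant in `ℓ^p` of an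
infinite set is `0`.
-/

noncomputable def signedPow (p t : ℝ) : ℝ := |t| ^ (p - 2) * t

lemma signedPow_neg (p t : ℝ) : signedPow p (-t) = -signedPow p t := by
  simp [signedPow]

lemma abs_signedPow {p : ℝ} (hp : p ≠ 1) (t : ℝ) : |signedPow p t| = |t| ^ (p - 1) := by
  rcases eq_or_ne t 0 with rfl | ht
  · simp [signedPow, Real.zero_rpow (sub_ne_zero.2 hp)]
  · rw [signedPow, abs_mul, abs_of_nonneg (by positivity), show p - 1 = p - 2 + 1 by ring,
      Real.rpow_add_one (abs_ne_zero.2 ht)]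

lemma signedPow_of_nonneg {p t : ℝ} (hp : p ≠ 1) (ht : 0 ≤ t) : signedPow p t = t ^ (p - 1) := by
  calc signedPow p t = |signedPow p t| := (abs_of_nonneg (mul_nonneg (by positivity) ht)).symm
    _ = t ^ (p - 1) := by rw [abs_signedPow hp, abs_of_nonneg ht]

lemma strictMono_signedPow {p : ℝ} (hp : 1 < p) : StrictMono (signedPow p) := by
  refine strictMono_of_odd_strictMonoOn_nonneg (signedPow_neg p) ?_
  refine (Real.strictMonoOn_rpow_Ici_of_exponent_pos (sub_pos.2 hp)).congr fun t ht => ?_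
  exact (signedPow_of_nonneg hp.ne' ht).symm

lemma StrictMono.sub_mul_sub_pos {f : ℝ → ℝ} (hf : StrictMono f) {a b : ℝ} (hab : a ≠ b) :
    0 < (a - b) * (f a - f b) := by
  rcases hab.lt_or_gt with h | h
  · exact mul_pos_of_neg_of_neg (sub_neg.2 h) (sub_neg.2 (hf h))
  · exact mul_pos (sub_pos.2 h) (sub_pos.2 (hf h))

lemma StrictMono.sub_mul_sub_eq_zero_iff {f : ℝ → ℝ} (hf : StrictMono f) {a b : ℝ} :
    (a - b) * (f a - f b) = 0 ↔ a = b := by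
  refine ⟨fun h => ?_, fun h => by rw [h, sub_self, zero_mul]⟩
  by_contra hab
  exact (hf.sub_mul_sub_pos hab).ne' h

lemma StrictMono.sub_mul_sub_nonneg {f : ℝ → ℝ} (hf : StrictMono f) (a b : ℝ) :
    0 ≤ (a - b) * (f a - f b) := by
  rcases eq_or_ne a b with rfl | hab
  · simp
  · exact (hf.sub_mul_sub_pos hab).le

lemma rpow_sub_one_mul_le_add_rpow {p x y : ℝ} (hp : 1 ≤ p) (hx : 0 ≤ x) (hy : 0 ≤ y) :
    x ^ (p - 1) * y ≤ x ^ p + y ^ p := by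
  have hm : 0 ≤ max x y := le_max_of_le_left hx
  calc x ^ (p - 1) * y ≤ max x y ^ (p - 1) * max x y :=
        mul_le_mul (Real.rpow_le_rpow hx (le_max_left x y) (by linarith)) (le_max_right x y) hy
          (by positivity)
    _ = max x y ^ p := by rw [← Real.rpow_add_one' hm (by linarith), sub_add_cancel]
    _ ≤ x ^ p + y ^ p := by
        rcases max_choice x y with h | h <;> rw [h]
        · linarith [Real.rpow_nonneg hy p]
        · linarith [Real.rpow_nonneg hx p]

namespace SimpleGraph

variable {V : Type*} (G : SimpleGraph V)

abbrev OrientedEdge : Type _ := {q : V × V // G.Adj q.1 q.2}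

def reverseEquiv : G.OrientedEdge ≃ G.OrientedEdge :=
  (Equiv.prodComm V V).subtypeEquiv fun _ => G.adj_comm _ _

def orientedEdgeEquivSigma : G.OrientedEdge ≃ Σ a, G.neighborSet a :=
  Equiv.subtypeProdEquivSigmaSubtype G.Adj

variable {G}

theorem Reachable.eq_of_forall_adj {α : Type*} {g : V → α} (hg : ∀ a b, G.Adj a b → g a = g b)
    {u v : V} (huv : G.Reachable u v) : g u = g v := by
  obtain ⟨w⟩ := huv
  induction w with
  | nil => rfl
  | cons hadj _ ih => exact (hg _ _ hadj).trans ih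

theorem Connected.eq_zero_of_summable_rpow [Infinite V] (hconn : G.Connected) {p : ℝ} (hp : p ≠ 0)
    {u : V → ℝ} (hadj : ∀ a b, G.Adj a b → u a = u b) (hu : Summable fun v => |u v| ^ p) :
    u = 0 := by
  obtain ⟨v₀⟩ := hconn.nonempty
  have hconst : (fun v => |u v| ^ p) = fun _ => |u v₀| ^ p :=
    funext fun v => by rw [(hconn v v₀).eq_of_forall_adj hadj]
  rw [hconst, summable_const_iff, Real.rpow_eq_zero (abs_nonneg _) hp, abs_eq_zero] at hu
  exact funext fun v => ((hconn v v₀).eq_of_forall_adj hadj).trans hu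

theorem summable_comp_fst_of_bddDeg (hlf : LocFin G) (hbd : BddDeg G) {g : V → ℝ} (hg0 : 0 ≤ g)
    (hg : Summable g) : Summable fun q : G.OrientedEdge => g q.1.1 := by
  obtain ⟨D, hD⟩ := hbd
  rw [← G.orientedEdgeEquivSigma.symm.summable_iff]
  refine (summable_sigma_of_nonneg fun _ => hg0 _).2
    ⟨fun a => have := (hlf a).to_subtype; .of_finite,
      (hg.mul_left (D : ℝ)).of_nonneg_of_le (fun a => ?_) fun a => ?_⟩
  · exact tsum_nonneg fun _ => hg0 a
  · change ∑' _ : G.neighborSet a, g a ≤ D * g a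
    rw [tsum_const, Nat.card_coe_set_eq, nsmul_eq_mul]
    exact mul_le_mul_of_nonneg_right (by exact_mod_cast hD a) (hg0 a)

theorem hasSum_sub_mul_of_antisymm {u : V → ℝ} {Φ : G.OrientedEdge → ℝ}
    (hΦ : ∀ q, Φ (G.reverseEquiv q) = -Φ q)
    (hu : Summable fun q : G.OrientedEdge => u q.1.1 * Φ q) :
    HasSum (fun q : G.OrientedEdge => (u q.1.2 - u q.1.1) * Φ q)
      (-2 * ∑' a, u a * ∑' b : G.neighborSet a, Φ ⟨(a, b), b.2⟩) := by
  have hrev : (fun q : G.OrientedEdge => u q.1.2 * Φ q) ∘ G.reverseEquiv =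
      fun q => -(u q.1.1 * Φ q) := by
    funext q
    change u q.1.1 * Φ (G.reverseEquiv q) = _
    rw [hΦ, mul_neg]
  have hsnd : HasSum (fun q : G.OrientedEdge => u q.1.2 * Φ q) (-∑' q, u q.1.1 * Φ q) := by
    rw [← G.reverseEquiv.hasSum_iff, hrev]
    exact hu.hasSum.neg
  have hfst : ∑' q : G.OrientedEdge, u q.1.1 * Φ q =
      ∑' a, u a * ∑' b : G.neighborSet a, Φ ⟨(a, b), b.2⟩ := by
    calc ∑' q : G.OrientedEdge, u q.1.1 * Φ q
        = ∑' c : Σ a, G.neighborSet a, u c.1 * Φ (G.orientedEdgeEquivSigma.symm c) :=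
          (G.orientedEdgeEquivSigma.symm.tsum_eq _).symm
      _ = ∑' a, ∑' b : G.neighborSet a, u a * Φ ⟨(a, b), b.2⟩ :=
          (G.orientedEdgeEquivSigma.symm.summable_iff.2 hu).tsum_sigma
      _ = _ := by simp_rw [tsum_mul_left]
  have hdiff := hsnd.sub hu.hasSum
  rw [hfst, show ∀ T : ℝ, -T - T = -2 * T by intro; ring] at hdiff
  simpa only [sub_mul] using hdiff

theorem pLaplacian_eq_tsum_neighborSet (p : ℝ) (f : V → ℝ) (v : V) :
    pLaplacian G p f v = ∑' u : G.neighborSet v, signedPow p (f u - f v) := by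
  rw [pLaplacian, tsum_subtype (G.neighborSet v) fun u => signedPow p (f u - f v)]
  congr 1
  funext u
  simp [Set.indicator, signedPow, G.adj_comm]

noncomputable def pCurrent (p : ℝ) (f : V → ℝ) (q : G.OrientedEdge) : ℝ :=
  signedPow p (f q.1.2 - f q.1.1)

theorem pCurrent_reverseEquiv (p : ℝ) (f : V → ℝ) (q : G.OrientedEdge) :
    pCurrent p f (G.reverseEquiv q) = -pCurrent p f q := by
  rw [pCurrent, pCurrent, ← signedPow_neg, neg_sub]
  rfl

theorem tsum_neighborSet_pCurrent_sub (hlf : LocFin G) (p : ℝ) (f h : V → ℝ) (a : V) :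
    ∑' b : G.neighborSet a, (pCurrent p h ⟨(a, b), b.2⟩ - pCurrent p f ⟨(a, b), b.2⟩) =
      pLaplacian G p h a - pLaplacian G p f a := by
  have := (hlf a).to_subtype
  rw [Summable.tsum_sub .of_finite .of_finite, pLaplacian_eq_tsum_neighborSet,
    pLaplacian_eq_tsum_neighborSet]
  rfl

theorem summable_mul_pCurrent (hlf : LocFin G) (hbd : BddDeg G) {p : ℝ} (hp : 1 < p)
    {g u : V → ℝ} (hg : DirichletSummable G p g) (hu : Summable fun v => |u v| ^ p) :
    Summable fun q : G.OrientedEdge => u q.1.1 * pCurrent p g q := by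
  have hu' := summable_comp_fst_of_bddDeg hlf hbd (fun v => by positivity) hu
  refine .of_norm <| (hg.add hu').of_nonneg_of_le (fun _ => norm_nonneg _) fun q => ?_
  rw [Real.norm_eq_abs, abs_mul, pCurrent, abs_signedPow hp.ne', abs_sub_comm, mul_comm]
  exact rpow_sub_one_mul_le_add_rpow hp.le (abs_nonneg _) (abs_nonneg _)

theorem sub_mul_pCurrent_sub_eq (p : ℝ) (f h : V → ℝ) (q : G.OrientedEdge) :
    ((h - f) q.1.2 - (h - f) q.1.1) * (pCurrent p h q - pCurrent p f q) =
      ((h q.1.2 - h q.1.1) - (f q.1.2 - f q.1.1)) *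
        (signedPow p (h q.1.2 - h q.1.1) - signedPow p (f q.1.2 - f q.1.1)) := by
  rw [pCurrent, pCurrent, Pi.sub_apply, Pi.sub_apply]
  ring

end SimpleGraph

open SimpleGraph

/-- two `p`-Dirichlet `p`-harmonic functions differing by an `ℓ^p`
function coincide. -/
theorem pharmonic_unique_in_class {V : Type*} [Infinite V] (p : ℝ) (hp : 1 < p)
    (G : SimpleGraph V) (hconn : G.Connected) (hlf : LocFin G) (hbd : BddDeg G)
    (f h : V → ℝ) (hfharm : IsPHarmonic G p f) (hhharm : IsPHarmonic G p h)
    (hfD : DirichletSummable G p f) (hhD : DirichletSummable G p h)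
    (hdiff : Summable fun v => |h v - f v| ^ p) :
    h = f := by
  have hflux : Summable fun q : G.OrientedEdge =>
      (h q.1.1 - f q.1.1) * (pCurrent p h q - pCurrent p f q) := by
    simpa only [mul_sub] using
      (summable_mul_pCurrent hlf hbd hp hhD hdiff).sub (summable_mul_pCurrent hlf hbd hp hfD hdiff)
  have henergy := hasSum_sub_mul_of_antisymm (u := h - f)
    (Φ := fun q => pCurrent p h q - pCurrent p f q) (fun q => by
    rw [pCurrent_reverseEquiv, pCurrent_reverseEquiv, neg_sub_neg, neg_sub]) hflux
  simp only [tsum_neighborSet_pCurrent_sub hlf, hfharm _, hhharm _, sub_self, mul_zero,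
    tsum_zero] at henergy
  have hmono := strictMono_signedPow hp
  have hterms := (hasSum_zero_iff_of_nonneg fun q => by
    rw [sub_mul_pCurrent_sub_eq]; exact hmono.sub_mul_sub_nonneg _ _).1 henergy
  have hadj : ∀ a b, G.Adj a b → (h - f) a = (h - f) b := fun a b hab => by
    have hq := congr_fun hterms ⟨(a, b), hab⟩
    rw [sub_mul_pCurrent_sub_eq, Pi.zero_apply, hmono.sub_mul_sub_eq_zero_iff] at hq
    simp only [Pi.sub_apply]
    linarith
  exact sub_eq_zero.1 (hconn.eq_zero_of_summable_rpow (by linarith) hadj hdiff)
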